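/- Let X be an irreducible topological space and let f : U → V, g : V → U be continuous maps between dense open subsets U, V of X, inverse to each other. Suppose f extends to a continuous map F on a maximal dense open set Dom(f) ⊇ U and g extends to G on Dom(g) ⊇ V, such that F = f on U and G = g on V, and any two continuous maps into X that agree on a dense open subset of their common open domain agree everywhere on it. Then F and G restrict to mutually inverse homeomorphisms between F⁻¹(Dom(g)) and G⁻¹(Dom(f)), and U ⊆ F⁻¹(Dom(g)), V ⊆ G⁻¹(Dom(f)). -/

import Mathlib

/-- The topological shadow of separatedness of a variety. -/
def EqOnOfEqOnDenseOpen (X : Type*) [TopologicalSpace X] : Prop :=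
  ∀ (D : Set X) (h k : X → X), IsOpen D → ContinuousOn h D → ContinuousOn k D →
    (∃ E : Set X, IsOpen E ∧ Dense E ∧ E ⊆ D ∧ ∀ x ∈ E, h x = k x) → ∀ x ∈ D, h x = k x

theorem mapsTo_inter_preimage_of_leftInvOn {X : Type*} {F G : X → X} {DomF DomG : Set X}
    (h : Set.LeftInvOn G F (DomF ∩ F ⁻¹' DomG)) :
    Set.MapsTo F (DomF ∩ F ⁻¹' DomG) (DomG ∩ G ⁻¹' DomF) := fun x hx =>
  ⟨hx.2, show G (F x) ∈ DomF from (h hx).symm ▸ hx.1⟩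

theorem leftInvOn_inter_preimage_of_dense {X : Type*} [TopologicalSpace X] {F G : X → X}
    {DomF DomG : Set X} (hX : EqOnOfEqOnDenseOpen X)
    (hDomFo : IsOpen DomF) (hDomGo : IsOpen DomG)
    (hFc : ContinuousOn F DomF) (hGc : ContinuousOn G DomG)
    {U : Set X} (hUo : IsOpen U) (hUd : Dense U) (hUA : U ⊆ DomF ∩ F ⁻¹' DomG)
    (hU : Set.LeftInvOn G F U) :
    Set.LeftInvOn G F (DomF ∩ F ⁻¹' DomG) :=
  hX _ (G ∘ F) id (hFc.isOpen_inter_preimage hDomFo hDomGo)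
    (hGc.comp (hFc.mono Set.inter_subset_left) fun _ hx => hx.2) continuousOn_id
    ⟨U, hUo, hUd, hUA, hU⟩

theorem stmt_3_general {X : Type*} [TopologicalSpace X]
    (U V : Set X) (hUo : IsOpen U) (hUd : Dense U) (hVo : IsOpen V) (hVd : Dense V)
    (f g F G : X → X)
    (hmapsf : Set.MapsTo f U V) (hmapsg : Set.MapsTo g V U)
    (hgf : ∀ x ∈ U, g (f x) = x) (hfg : ∀ y ∈ V, f (g y) = y)
    (DomF DomG : Set X)
    (hDomFo : IsOpen DomF) (hDomGo : IsOpen DomG)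
    (hUF : U ⊆ DomF) (hVG : V ⊆ DomG)
    (hFc : ContinuousOn F DomF) (hGc : ContinuousOn G DomG)
    (hFU : ∀ x ∈ U, F x = f x) (hGV : ∀ y ∈ V, G y = g y)
    -- separation: continuous maps agreeing on a dense open subset of a common open
    -- domain agree on all of it
    (hSep : ∀ (D : Set X) (h k : X → X), IsOpen D → ContinuousOn h D → ContinuousOn k D →
      (∃ E : Set X, IsOpen E ∧ Dense E ∧ E ⊆ D ∧ ∀ x ∈ E, h x = k x) →
      ∀ x ∈ D, h x = k x) :
    Set.MapsTo F (DomF ∩ F ⁻¹' DomG) (DomG ∩ G ⁻¹' DomF) ∧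
    Set.MapsTo G (DomG ∩ G ⁻¹' DomF) (DomF ∩ F ⁻¹' DomG) ∧
    (∀ x ∈ DomF ∩ F ⁻¹' DomG, G (F x) = x) ∧
    (∀ y ∈ DomG ∩ G ⁻¹' DomF, F (G y) = y) ∧
    U ⊆ DomF ∩ F ⁻¹' DomG ∧ V ⊆ DomG ∩ G ⁻¹' DomF := by
  have hFmaps : Set.MapsTo F U V := hmapsf.congr fun x hx => (hFU x hx).symm
  have hGmaps : Set.MapsTo G V U := hmapsg.congr fun y hy => (hGV y hy).symm
  have hUA : U ⊆ DomF ∩ F ⁻¹' DomG := fun x hx => ⟨hUF hx, hVG (hFmaps hx)⟩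
  have hVB : V ⊆ DomG ∩ G ⁻¹' DomF := fun y hy => ⟨hVG hy, hUF (hGmaps hy)⟩
  have hGF : Set.LeftInvOn G F (DomF ∩ F ⁻¹' DomG) :=
    leftInvOn_inter_preimage_of_dense hSep hDomFo hDomGo hFc hGc hUo hUd hUA fun x hx => by
      rw [hFU x hx, hGV _ (hmapsf hx), hgf x hx]
  have hFG : Set.LeftInvOn F G (DomG ∩ G ⁻¹' DomF) :=
    leftInvOn_inter_preimage_of_dense hSep hDomGo hDomFo hGc hFc hVo hVd hVB fun y hy => by
      rw [hGV y hy, hFU _ (hmapsg hy), hfg y hy]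
  exact ⟨mapsTo_inter_preimage_of_leftInvOn hGF, mapsTo_inter_preimage_of_leftInvOn hFG,
    hGF, hFG, hUA, hVB⟩

/-- Abstract form of Lemma 3.6 of the paper: a birational self-map `f` with inverse `g`
has a canonical maximal representative. `F`, `G` are the extensions of `f`, `g` to their
(maximal) dense open domains of definition; they restrict to mutually inverse
homeomorphisms between `F⁻¹(Dom g)` and `G⁻¹(Dom f)`, and these contain `U`, `V`. -/
theorem stmt_3 {X : Type*} [TopologicalSpace X] [IrreducibleSpace X]
    (U V : Set X) (hUo : IsOpen U) (hUd : Dense U) (hVo : IsOpen V) (hVd : Dense V)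
    (f g F G : X → X)
    (hf : ContinuousOn f U) (hg : ContinuousOn g V)
    (hmapsf : Set.MapsTo f U V) (hmapsg : Set.MapsTo g V U)
    (hgf : ∀ x ∈ U, g (f x) = x) (hfg : ∀ y ∈ V, f (g y) = y)
    (DomF DomG : Set X)
    (hDomFo : IsOpen DomF) (hDomFd : Dense DomF) (hDomGo : IsOpen DomG) (hDomGd : Dense DomG)
    (hUF : U ⊆ DomF) (hVG : V ⊆ DomG)
    (hFc : ContinuousOn F DomF) (hGc : ContinuousOn G DomG)
    (hFU : ∀ x ∈ U, F x = f x) (hGV : ∀ y ∈ V, G y = g y)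
    -- maximality of the domains of definition
    (hFmax : ∀ D : Set X, IsOpen D → Dense D → DomF ⊆ D →
      (∃ F' : X → X, ContinuousOn F' D ∧ ∀ x ∈ DomF, F' x = F x) → D = DomF)
    (hGmax : ∀ D : Set X, IsOpen D → Dense D → DomG ⊆ D →
      (∃ G' : X → X, ContinuousOn G' D ∧ ∀ y ∈ DomG, G' y = G y) → D = DomG)
    -- separation: continuous maps agreeing on a dense open subset of a common open
    -- domain agree on all of it
    (hSep : ∀ (D : Set X) (h k : X → X), IsOpen D → ContinuousOn h D → ContinuousOn k D →
      (∃ E : Set X, IsOpen E ∧ Dense E ∧ E ⊆ D ∧ ∀ x ∈ E, h x = k x) →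
      ∀ x ∈ D, h x = k x) :
    Set.MapsTo F (DomF ∩ F ⁻¹' DomG) (DomG ∩ G ⁻¹' DomF) ∧
    Set.MapsTo G (DomG ∩ G ⁻¹' DomF) (DomF ∩ F ⁻¹' DomG) ∧
    (∀ x ∈ DomF ∩ F ⁻¹' DomG, G (F x) = x) ∧
    (∀ y ∈ DomG ∩ G ⁻¹' DomF, F (G y) = y) ∧
    U ⊆ DomF ∩ F ⁻¹' DomG ∧ V ⊆ DomG ∩ G ⁻¹' DomF :=
  stmt_3_general U V hUo hUd hVo hVd f g F G hmapsf hmapsg hgf hfg DomF DomG hDomFo hDomGo hUF hVG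
    hFc hGc hFU hGV hSep
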